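/- arXiv:1706.04095 — 5 statements merged into one kernel-verified Lean document; each statement's English description precedes it below -/
import Mathlib

section
/- Let C be a category equipped with a flow (T, u, μ) and let a, b, c be objects of C. If (φ, ψ) is a weak ε-interleaving of a and b and (φ', ψ') is a weak ζ-interleaving of b and c, then the morphisms φ'' = (μ_(ε,ζ) at c) ∘ T_ε(φ') ∘ φ : a → T_(ε+ζ)(c) and ψ'' = (μ_(ζ,ε) at a) ∘ T_ζ(ψ) ∘ ψ' : c → T_(ζ+ε)(a) form a weak (ε+ζ)-interleaving of a and c. -/
open CategoryTheory
open scoped NNReal ENNReal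

universe v u

/-- A flow on a category `C`: a lax monoidal action of `([0,∞), ≤, +)` on `C`. -/
structure CatFlow (C : Type u) [Category.{v} C] where
  /-- the `ε`-translation endofunctors -/
  T : ℝ≥0 → C ⥤ C
  /-- the natural transformations `T ε ⟶ T ζ` for `ε ≤ ζ` -/
  Tle : ∀ {ε ζ : ℝ≥0}, ε ≤ ζ → (T ε ⟶ T ζ)
  Tle_refl : ∀ ε : ℝ≥0, Tle (le_refl ε) = 𝟙 (T ε)
  Tle_trans : ∀ {ε ζ δ : ℝ≥0} (h₁ : ε ≤ ζ) (h₂ : ζ ≤ δ), Tle h₁ ≫ Tle h₂ = Tle (h₁.trans h₂)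
  /-- the unit coherence natural transformation `𝟭 C ⟶ T 0` -/
  u : 𝟭 C ⟶ T 0
  /-- the multiplication coherence transformations; note `(T ζ ⋙ T ε).obj a = (T ε).obj ((T ζ).obj a)`,
  which is the composite `T_ε ∘ T_ζ` of the paper. -/
  μ : ∀ ε ζ : ℝ≥0, T ζ ⋙ T ε ⟶ T (ε + ζ)
  unit_left : ∀ (ε : ℝ≥0) (a : C),
    u.app ((T ε).obj a) ≫ (μ 0 ε).app a = eqToHom (by simp)
  unit_right : ∀ (ε : ℝ≥0) (a : C),
    (T ε).map (u.app a) ≫ (μ ε 0).app a = eqToHom (by simp)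
  assoc : ∀ (ε ζ δ : ℝ≥0) (a : C),
    (μ ε ζ).app ((T δ).obj a) ≫ (μ (ε + ζ) δ).app a
      = (T ε).map ((μ ζ δ).app a) ≫ (μ ε (ζ + δ)).app a ≫ eqToHom (by rw [add_assoc])
  compat : ∀ {ε ζ δ κ : ℝ≥0} (h₁ : ε ≤ δ) (h₂ : ζ ≤ κ) (a : C),
    (μ ε ζ).app a ≫ (Tle (add_le_add h₁ h₂)).app a
      = (T ε).map ((Tle h₂).app a) ≫ (Tle h₁).app ((T κ).obj a) ≫ (μ δ κ).app a

/-- `(φ, ψ)` is a weak `ε`-interleaving of `a` and `b`. -/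
structure IsWeakInterleaving {C : Type u} [Category.{v} C] (F : CatFlow C) (ε : ℝ≥0)
    (a b : C) (φ : a ⟶ (F.T ε).obj b) (ψ : b ⟶ (F.T ε).obj a) : Prop where
  left : φ ≫ (F.T ε).map ψ ≫ (F.μ ε ε).app a
      = F.u.app a ≫ (F.Tle (zero_le : (0 : ℝ≥0) ≤ ε + ε)).app a
  right : ψ ≫ (F.T ε).map φ ≫ (F.μ ε ε).app b
      = F.u.app b ≫ (F.Tle (zero_le : (0 : ℝ≥0) ≤ ε + ε)).app b

/-- `a` and `b` are weakly `ε`-interleaved. -/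
def WeaklyInterleaved {C : Type u} [Category.{v} C] (F : CatFlow C) (ε : ℝ≥0) (a b : C) : Prop :=
  ∃ φ ψ, IsWeakInterleaving F ε a b φ ψ

/-- The interleaving distance associated to a flow. -/
noncomputable def interleavingDist {C : Type u} [Category.{v} C] (F : CatFlow C) (a b : C) :
    ℝ≥0∞ :=
  sInf { x : ℝ≥0∞ | ∃ ε : ℝ≥0, x = ε ∧ WeaklyInterleaved F ε a b }

/-!
In `T_(ε+ζ)(ψ'') ∘ φ''`, naturality of `μ` and associativity bring `T_ε(ψ' ∘ φ')` next to a
multiplication, where the `ζ`-interleaving collapses it to the unit followed by a shift; the unit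
law and compatibility turn the whole middle part into a shift `T_(ε ≤ ε+ζ+ζ)` after `φ`, which
naturality moves past `T_ε ψ`, and then the `ε`-interleaving collapses what is left. Transports
`eqToHom` along index equalities are rewritten as structure maps `T_(ε ≤ ζ)`, which are natural
and compatible with `μ`.
-/

namespace CatFlow

variable {C : Type u} [Category.{v} C] (F : CatFlow C)

/-- `IsWeakInterleaving F ε a b φ ψ` says that `(φ, ψ)` and `(ψ, φ)` are half interleavings with
`δ = ε`. With separate shifts on the two legs, composing half interleavings with shifts `(ε, δ)`
and `(ζ, κ)` gives one with shifts `(ε + ζ, κ + δ)` on the nose, with no transport along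
`ζ + ε = ε + ζ`. -/
def IsHalfInterleaving (ε δ : ℝ≥0) {a b : C} (φ : a ⟶ (F.T ε).obj b) (ψ : b ⟶ (F.T δ).obj a) :
    Prop :=
  φ ≫ (F.T ε).map ψ ≫ (F.μ ε δ).app a = F.u.app a ≫ (F.Tle (zero_le : (0 : ℝ≥0) ≤ ε + δ)).app a

lemma Tle_app_trans {ε ζ δ : ℝ≥0} (h₁ : ε ≤ ζ) (h₂ : ζ ≤ δ) (X : C) :
    (F.Tle h₁).app X ≫ (F.Tle h₂).app X = (F.Tle (h₁.trans h₂)).app X := by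
  rw [← NatTrans.comp_app, F.Tle_trans]

lemma eqToHom_eq_Tle_app {ε ζ : ℝ≥0} (h : ε = ζ) (X : C) :
    eqToHom (show (F.T ε).obj X = (F.T ζ).obj X by rw [h]) = (F.Tle h.le).app X := by
  subst h
  simp [F.Tle_refl]

lemma map_u_comp_μ_zero (ε : ℝ≥0) (X : C) :
    (F.T ε).map (F.u.app X) ≫ (F.μ ε 0).app X = (F.Tle (add_zero ε).ge).app X := by
  rw [F.unit_right, eqToHom_eq_Tle_app _ (add_zero ε).symm]
  rfl

lemma μ_assoc_Tle (ε ζ δ : ℝ≥0) (X : C) :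
    (F.μ ε ζ).app ((F.T δ).obj X) ≫ (F.μ (ε + ζ) δ).app X
      = (F.T ε).map ((F.μ ζ δ).app X) ≫ (F.μ ε (ζ + δ)).app X ≫
        (F.Tle (add_assoc ε ζ δ).ge).app X := by
  rw [F.assoc, eqToHom_eq_Tle_app _ (add_assoc ε ζ δ).symm]

lemma μ_assoc_Tle' (ε ζ δ : ℝ≥0) (X : C) :
    (F.T ε).map ((F.μ ζ δ).app X) ≫ (F.μ ε (ζ + δ)).app X
      = (F.μ ε ζ).app ((F.T δ).obj X) ≫ (F.μ (ε + ζ) δ).app X ≫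
        (F.Tle (add_assoc ε ζ δ).le).app X := by
  rw [← Category.assoc, μ_assoc_Tle, Category.assoc, Category.assoc, Tle_app_trans, F.Tle_refl,
    NatTrans.id_app, Category.comp_id]

lemma Tle_app_comp_μ {ε ε' : ℝ≥0} (h : ε ≤ ε') (δ : ℝ≥0) (X : C) :
    (F.Tle h).app ((F.T δ).obj X) ≫ (F.μ ε' δ).app X
      = (F.μ ε δ).app X ≫ (F.Tle (add_le_add h le_rfl)).app X := by
  simpa [F.Tle_refl] using (F.compat h (le_refl δ) X).symm

lemma map_Tle_app_comp_μ (ε : ℝ≥0) {δ δ' : ℝ≥0} (h : δ ≤ δ') (X : C) :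
    (F.T ε).map ((F.Tle h).app X) ≫ (F.μ ε δ').app X
      = (F.μ ε δ).app X ≫ (F.Tle (add_le_add le_rfl h)).app X := by
  simpa [F.Tle_refl] using (F.compat (le_refl ε) h X).symm

namespace IsHalfInterleaving

variable {F} {a b c : C}

lemma mono_left {ε ε' δ : ℝ≥0} {φ : a ⟶ (F.T ε).obj b} {ψ : b ⟶ (F.T δ).obj a}
    (h : F.IsHalfInterleaving ε δ φ ψ) (hε : ε ≤ ε') :
    F.IsHalfInterleaving ε' δ (φ ≫ (F.Tle hε).app b) ψ := by
  unfold IsHalfInterleaving at h ⊢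
  rw [Category.assoc, ← (F.Tle hε).naturality_assoc, Tle_app_comp_μ]
  slice_lhs 1 3 => rw [h]
  rw [Category.assoc, Tle_app_trans]

lemma mono_right {ε δ δ' : ℝ≥0} {φ : a ⟶ (F.T ε).obj b} {ψ : b ⟶ (F.T δ).obj a}
    (h : F.IsHalfInterleaving ε δ φ ψ) (hδ : δ ≤ δ') :
    F.IsHalfInterleaving ε δ' φ (ψ ≫ (F.Tle hδ).app a) := by
  unfold IsHalfInterleaving at h ⊢
  rw [Functor.map_comp, Category.assoc, map_Tle_app_comp_μ]
  slice_lhs 1 3 => rw [h]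
  rw [Category.assoc, Tle_app_trans]

lemma translate {ζ κ : ℝ≥0} {φ' : b ⟶ (F.T ζ).obj c} {ψ' : c ⟶ (F.T κ).obj b}
    (h : F.IsHalfInterleaving ζ κ φ' ψ') (ε : ℝ≥0) :
    (F.T ε).map φ' ≫ (F.μ ε ζ).app c ≫ (F.T (ε + ζ)).map ψ' ≫ (F.μ (ε + ζ) κ).app b
      = (F.Tle (le_add_right (le_add_right le_rfl) : ε ≤ ε + ζ + κ)).app b := by
  unfold IsHalfInterleaving at h
  rw [← (F.μ ε ζ).naturality_assoc, μ_assoc_Tle, Functor.comp_map]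
  simp only [← Functor.map_comp_assoc]
  rw [h, Functor.map_comp_assoc]
  slice_lhs 2 3 => rw [map_Tle_app_comp_μ]
  slice_lhs 1 2 => rw [map_u_comp_μ_zero]
  rw [Tle_app_trans, Tle_app_trans]

lemma comp {ε δ ζ κ : ℝ≥0} {φ : a ⟶ (F.T ε).obj b} {ψ : b ⟶ (F.T δ).obj a}
    {φ' : b ⟶ (F.T ζ).obj c} {ψ' : c ⟶ (F.T κ).obj b}
    (h : F.IsHalfInterleaving ε δ φ ψ) (h' : F.IsHalfInterleaving ζ κ φ' ψ') :
    F.IsHalfInterleaving (ε + ζ) (κ + δ) (φ ≫ (F.T ε).map φ' ≫ (F.μ ε ζ).app c)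
      (ψ' ≫ (F.T κ).map ψ ≫ (F.μ κ δ).app a) := by
  have h_shifted := h.mono_left (le_add_right (le_add_right le_rfl) : ε ≤ ε + ζ + κ)
  unfold IsHalfInterleaving at h_shifted ⊢
  simp only [Functor.map_comp, Category.assoc]
  rw [μ_assoc_Tle', ← Functor.comp_map (F.T κ) (F.T (ε + ζ)) ψ, (F.μ (ε + ζ) κ).naturality_assoc]
  slice_lhs 2 5 => rw [h'.translate]
  slice_lhs 1 4 => rw [← Category.assoc, h_shifted]
  rw [Category.assoc, Tle_app_trans]

end IsHalfInterleaving

end CatFlow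

/-- Composing a weak `ε`-interleaving of `a, b` with a weak `ζ`-interleaving of `b, c`
produces a weak `(ε+ζ)`-interleaving of `a, c` (triangle inequality, constructive form). -/
theorem weakInterleaving_comp {C : Type u} [Category.{v} C] (F : CatFlow C)
    {ε ζ : ℝ≥0} {a b c : C}
    (φ : a ⟶ (F.T ε).obj b) (ψ : b ⟶ (F.T ε).obj a)
    (φ' : b ⟶ (F.T ζ).obj c) (ψ' : c ⟶ (F.T ζ).obj b)
    (h₁ : IsWeakInterleaving F ε a b φ ψ) (h₂ : IsWeakInterleaving F ζ b c φ' ψ') :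
    IsWeakInterleaving F (ε + ζ) a c
      (φ ≫ (F.T ε).map φ' ≫ (F.μ ε ζ).app c)
      (ψ' ≫ (F.T ζ).map ψ ≫ (F.μ ζ ε).app a ≫ eqToHom (by rw [add_comm])) := by
  have h_swap : ψ' ≫ (F.T ζ).map ψ ≫ (F.μ ζ ε).app a ≫ eqToHom (by rw [add_comm])
      = (ψ' ≫ (F.T ζ).map ψ ≫ (F.μ ζ ε).app a) ≫ (F.Tle (add_comm ζ ε).le).app a := by
    rw [F.eqToHom_eq_Tle_app (add_comm ζ ε), Category.assoc, Category.assoc]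
  rw [h_swap]
  exact ⟨(CatFlow.IsHalfInterleaving.comp h₁.left h₂.left).mono_right _,
    (CatFlow.IsHalfInterleaving.comp h₂.right h₁.right).mono_left _⟩
end

section
/- Let (M,d) be a metric space and consider the slice category Top↓M equipped with the flow T̂ defined below. Two objects (X,f) and (Y,g) are weakly ε-interleaved with respect to T̂ if and only if there exists a homeomorphism Φ : X → Y such that d(f(x), g(Φ(x))) ≤ ε for every x ∈ X. Consequently the interleaving distance d_((Top↓M),T̂)((X,f),(Y,g)) equals the infimum over all homeomorphisms Φ : X → Y of sup_{x∈X} d(f(x), g(Φ(x))) (and equals ∞ if X and Y are not homeomorphic). -/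
open CategoryTheory
open scoped NNReal ENNReal

universe v u

noncomputable section OverM

open Set

variable (M : Type) [MetricSpace M]

/-- The category of `M`-spaces: the slice category `Top ↓ M`. -/
abbrev MSpaces : Type 1 := Over (TopCat.of M)

variable {M}

/-- The value of the reference map of an `M`-space at a point. -/
def mval (a : MSpaces M) (x : a.left) : M := a.hom x

/-- The underlying set `Q_ε(X,f) = {(x,m) : d(f x, m) ≤ ε}`. -/
abbrev QCarrier (ε : ℝ≥0) (a : MSpaces M) : Type :=
  { p : a.left × M // dist (mval a p.1) p.2 ≤ (ε : ℝ) }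

/-- The `ε`-translation of an `M`-space:
`(X, f) ↦ (Q_ε(X,f), p₂)` where `Q_ε(X,f) = {(x,m) : d(f x, m) ≤ ε}`. -/
def QObj (ε : ℝ≥0) (a : MSpaces M) : MSpaces M :=
  Over.mk (Y := TopCat.of (QCarrier ε a))
    (TopCat.ofHom (ContinuousMap.mk (fun p => p.1.2)
      (continuous_snd.comp continuous_subtype_val)))

/-- The `ε`-translation functor on `M`-spaces. -/
def QT (ε : ℝ≥0) : MSpaces M ⥤ MSpaces M where
  obj a := QObj ε a
  map {a b} φ := Over.homMk
    (TopCat.ofHom (ContinuousMap.mk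
      (fun (p : QCarrier ε a) => (⟨(φ.left p.1.1, p.1.2), by
        show dist (mval b (φ.left p.1.1)) p.1.2 ≤ (ε : ℝ)
        rw [show mval b (φ.left p.1.1) = mval a p.1.1 from
          ConcreteCategory.congr_hom (Over.w φ) p.1.1]
        exact p.2⟩ : QCarrier ε b))
      ((((ContinuousMap.continuous φ.left.hom).comp
          (continuous_fst.comp continuous_subtype_val)).prodMk
        (continuous_snd.comp continuous_subtype_val)).subtype_mk
          (fun (p : QCarrier ε a) => by
            show dist (mval b (φ.left p.1.1)) p.1.2 ≤ (ε : ℝ)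
            rw [show mval b (φ.left p.1.1) = mval a p.1.1 from
              ConcreteCategory.congr_hom (Over.w φ) p.1.1]
            exact p.2))))
    (by ext p; rfl)
  map_id a := by
    ext p
    rfl
  map_comp φ ψ := by
    ext p
    rfl

/-- The cast morphism `(QT ε).obj a ⟶ (QT ζ).obj a` associated to an equality `ε = ζ`. -/
def castHomM {ε ζ : ℝ≥0} (h : ε = ζ) (a : MSpaces M) :
    (QT ε).obj a ⟶ (QT ζ).obj a :=
  Over.homMk
    (TopCat.ofHom (ContinuousMap.mk
      (fun (p : QCarrier ε a) => (⟨p.1, by rw [← h]; exact p.2⟩ : QCarrier ζ a))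
      (continuous_subtype_val.subtype_mk (fun (p : QCarrier ε a) => by
        rw [← h]; exact p.2))))
    (by ext p; rfl)

lemma eqToHom_QT {ε ζ : ℝ≥0} (h : ε = ζ) (a : MSpaces M) :
    eqToHom (show (QT ε).obj a = (QT ζ).obj a by rw [h]) = castHomM h a := by
  subst h
  simp only [eqToHom_refl]
  ext p
  rfl

/-- The flow `T̂` on the slice category `Top ↓ M` of `M`-spaces, with
`T̂_ε(X,f) = (Q_ε(X,f), p₂)`. -/
def overFlowM : CatFlow (MSpaces M) where
  T := QT
  Tle {ε ζ} h :=
    { app := fun a => Over.homMk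
        (TopCat.ofHom (ContinuousMap.mk
          (fun (p : QCarrier ε a) =>
            (⟨p.1, by exact le_trans p.2 (NNReal.coe_le_coe.2 h)⟩ : QCarrier ζ a))
          (continuous_subtype_val.subtype_mk (fun (p : QCarrier ε a) => by
            exact le_trans p.2 (NNReal.coe_le_coe.2 h)))))
        (by ext p; rfl)
      naturality := fun a b φ => by ext p; rfl }
  Tle_refl ε := by
    ext a p
    rfl
  Tle_trans h₁ h₂ := by
    ext a p
    rfl
  u :=
    { app := fun a => Over.homMk
        (TopCat.ofHom (ContinuousMap.mk (fun (x : a.left) => (⟨(x, mval a x), by simp⟩ : QCarrier 0 a))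
          ((continuous_id.prodMk
            (show Continuous (mval a) from ContinuousMap.continuous a.hom.hom)).subtype_mk
              (fun (x : a.left) => by simp))))
        (by ext x; rfl)
      naturality := fun a b φ => by
        ext x
        refine Subtype.ext (Prod.ext_iff.mpr ⟨rfl, ?_⟩)
        exact ConcreteCategory.congr_hom (Over.w φ) x }
  μ ε ζ :=
    { app := fun a => Over.homMk
        (TopCat.ofHom (ContinuousMap.mk
          (fun (q : QCarrier ε (QObj ζ a)) => (⟨((show QCarrier ζ a from q.1.1).1.1, q.1.2), by
            have h1 : dist (mval a (show QCarrier ζ a from q.1.1).1.1) (show QCarrier ζ a from q.1.1).1.2 ≤ (ζ : ℝ) := (show QCarrier ζ a from q.1.1).2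
            have h2 : dist (show QCarrier ζ a from q.1.1).1.2 q.1.2 ≤ (ε : ℝ) := q.2
            calc dist (mval a (show QCarrier ζ a from q.1.1).1.1) q.1.2
                ≤ dist (mval a (show QCarrier ζ a from q.1.1).1.1) (show QCarrier ζ a from q.1.1).1.2 + dist (show QCarrier ζ a from q.1.1).1.2 q.1.2 :=
                  dist_triangle _ _ _
              _ ≤ (ζ : ℝ) + (ε : ℝ) := add_le_add h1 h2
              _ = ((ε + ζ : ℝ≥0) : ℝ) := by push_cast; ring⟩ : QCarrier (ε + ζ) a))
          (((continuous_fst.comp (continuous_subtype_val.comp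
              (continuous_fst.comp (continuous_subtype_val (p := fun p : (QObj ζ a).left × M => dist (mval (QObj ζ a) p.1) p.2 ≤ (ε : ℝ)))))).prodMk
            (continuous_snd.comp continuous_subtype_val)).subtype_mk
              (fun (q : QCarrier ε (QObj ζ a)) => by
                have h1 : dist (mval a (show QCarrier ζ a from q.1.1).1.1) (show QCarrier ζ a from q.1.1).1.2 ≤ (ζ : ℝ) := (show QCarrier ζ a from q.1.1).2
                have h2 : dist (show QCarrier ζ a from q.1.1).1.2 q.1.2 ≤ (ε : ℝ) := q.2
                calc dist (mval a (show QCarrier ζ a from q.1.1).1.1) q.1.2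
                    ≤ dist (mval a (show QCarrier ζ a from q.1.1).1.1) (show QCarrier ζ a from q.1.1).1.2 + dist (show QCarrier ζ a from q.1.1).1.2 q.1.2 :=
                      dist_triangle _ _ _
                  _ ≤ (ζ : ℝ) + (ε : ℝ) := add_le_add h1 h2
                  _ = ((ε + ζ : ℝ≥0) : ℝ) := by push_cast; ring))))
        (by ext q; rfl)
      naturality := fun a b φ => by ext q; rfl }
  unit_left ε a := by
    rw [eqToHom_QT (zero_add ε).symm a]
    ext p
    rfl
  unit_right ε a := by
    rw [eqToHom_QT (add_zero ε).symm a]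
    ext p
    rfl
  assoc ε ζ δ a := by
    rw [eqToHom_QT (add_assoc ε ζ δ).symm a]
    ext p
    rfl
  compat h₁ h₂ a := by
    ext p
    rfl

end OverM

/-! A morphism `(X, f) ⟶ T̂_ε (Y, g)` is the same as a continuous map `h : X → Y` with
`d (g (h x)) (f x) ≤ ε`: the slice condition forces its `M`-component to be `f`. In these terms
the composites in the interleaving equations are `x ↦ (ψ (φ x), f x)` and `x ↦ (x, f x)`, so a
weak `ε`-interleaving is exactly a pair of mutually inverse such maps, i.e. a homeomorphism moving
reference values by at most `ε`. The distance formula is then the formal identity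
`inf {ε | ∃ Φ, sup_x d ≤ ε} = inf_Φ sup_x d`. -/

theorem ENNReal.sInf_exists_forall_le_eq_iInf_iSup_ofReal {ι α : Type*} (D : ι → α → ℝ) :
    sInf {x : ℝ≥0∞ | ∃ ε : ℝ≥0, x = ε ∧ ∃ i, ∀ a, D i a ≤ ε} =
      ⨅ i, ⨆ a, ENNReal.ofReal (D i a) := by
  refine le_antisymm (le_iInf fun i => ?_) (le_sInf ?_)
  · rcases eq_or_ne (⨆ a, ENNReal.ofReal (D i a)) ⊤ with h | h
    · exact h ▸ le_top
    · refine sInf_le ⟨_, (ENNReal.coe_toNNReal h).symm, i, fun a => ?_⟩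
      exact (ENNReal.ofReal_le_iff_le_toReal h).1 (le_iSup (fun a => ENNReal.ofReal (D i a)) a)
  · rintro _ ⟨ε, rfl, i, hi⟩
    exact iInf_le_of_le i (iSup_le fun a => ENNReal.ofReal_le_of_le_toReal (hi a))

namespace QT

variable {M : Type} [MetricSpace M] {ε : ℝ≥0} {a b : MSpaces M}

def lift (h : C(a.left, b.left)) (hh : ∀ x, dist (mval b (h x)) (mval a x) ≤ ε) :
    a ⟶ (QT ε).obj b :=
  Over.homMk (TopCat.ofHom ⟨fun x => (⟨(h x, mval a x), hh x⟩ : QCarrier ε b),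
    (h.continuous.prodMk a.hom.hom.continuous).subtype_mk hh⟩) (by ext x; rfl)

def base (φ : a ⟶ (QT ε).obj b) : C(a.left, b.left) :=
  ⟨fun x => (show QCarrier ε b from φ.left x).1.1,
    (continuous_fst.comp continuous_subtype_val).comp φ.left.hom.continuous⟩

theorem base_lift (h : C(a.left, b.left)) (hh : ∀ x, dist (mval b (h x)) (mval a x) ≤ ε) :
    base (lift h hh) = h :=
  rfl

theorem dist_base_le (φ : a ⟶ (QT ε).obj b) (x : a.left) :
    dist (mval a x) (mval b (base φ x)) ≤ ε := by
  have hφ : (show QCarrier ε b from φ.left x).1.2 = mval a x :=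
    ConcreteCategory.congr_hom (Over.w φ) x
  rw [dist_comm, ← hφ]
  exact (show QCarrier ε b from φ.left x).2

end QT

section Interleaving

variable {M : Type} [MetricSpace M] {ε : ℝ≥0} {a b : MSpaces M}

theorem overFlowM_interleaving_eq_iff (φ : a ⟶ (QT ε).obj b) (ψ : b ⟶ (QT ε).obj a) :
    φ ≫ (overFlowM.T ε).map ψ ≫ (overFlowM.μ ε ε).app a
        = overFlowM.u.app a ≫ (overFlowM.Tle (zero_le : (0 : ℝ≥0) ≤ ε + ε)).app a ↔
      Function.LeftInverse (QT.base ψ) (QT.base φ) := by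
  constructor
  · intro h x
    exact congrArg (fun q : QCarrier (ε + ε) a => q.1.1)
      (ConcreteCategory.congr_hom (congrArg CommaMorphism.left h) x)
  · intro h
    ext x
    exact Subtype.ext (Prod.ext (h x) (ConcreteCategory.congr_hom (Over.w φ) x))

theorem overFlowM_isWeakInterleaving_iff (φ : a ⟶ (QT ε).obj b) (ψ : b ⟶ (QT ε).obj a) :
    IsWeakInterleaving overFlowM ε a b φ ψ ↔
      Function.LeftInverse (QT.base ψ) (QT.base φ) ∧
        Function.RightInverse (QT.base ψ) (QT.base φ) := by
  exact ⟨fun h => ⟨(overFlowM_interleaving_eq_iff φ ψ).1 h.left,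
      (overFlowM_interleaving_eq_iff ψ φ).1 h.right⟩,
    fun h => ⟨(overFlowM_interleaving_eq_iff φ ψ).2 h.1, (overFlowM_interleaving_eq_iff ψ φ).2 h.2⟩⟩

theorem overFlowM_weaklyInterleaved_iff :
    WeaklyInterleaved overFlowM ε a b ↔
      ∃ Φ : a.left ≃ₜ b.left, ∀ x, dist (mval a x) (mval b (Φ x)) ≤ ε := by
  constructor
  · rintro ⟨φ, ψ, hφψ⟩
    obtain ⟨hl, hr⟩ := (overFlowM_isWeakInterleaving_iff φ ψ).1 hφψ
    exact ⟨⟨⟨QT.base φ, QT.base ψ, hl, hr⟩, (QT.base φ).continuous, (QT.base ψ).continuous⟩,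
      QT.dist_base_le φ⟩
  · rintro ⟨Φ, hΦ⟩
    have hΦ' : ∀ x, dist (mval b (Φ x)) (mval a x) ≤ ε := fun x => dist_comm (mval a x) _ ▸ hΦ x
    have hΦsymm : ∀ y, dist (mval a (Φ.symm y)) (mval b y) ≤ ε := fun y => by
      simpa only [Φ.apply_symm_apply] using hΦ (Φ.symm y)
    refine ⟨QT.lift (Φ : C(a.left, b.left)) hΦ', QT.lift (Φ.symm : C(b.left, a.left)) hΦsymm, ?_⟩
    rw [overFlowM_isWeakInterleaving_iff, QT.base_lift, QT.base_lift]
    exact ⟨Φ.symm_apply_apply, Φ.apply_symm_apply⟩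

end Interleaving

/-- Two `M`-spaces `(X,f)` and `(Y,g)` are weakly `ε`-interleaved for the flow `T̂` on
`Top ↓ M` iff there is a homeomorphism `Φ : X → Y` with `d (f x) (g (Φ x)) ≤ ε` for all
`x`; consequently the interleaving distance is the extended `L∞`-distance
`inf_Φ sup_x d (f x) (g (Φ x))` (which is `∞` if `X ≄ Y`). -/
theorem overFlowM_interleaving_iff (M : Type) [MetricSpace M] (a b : MSpaces M) :
    (∀ ε : ℝ≥0, WeaklyInterleaved overFlowM ε a b ↔
      ∃ Φ : a.left ≃ₜ b.left, ∀ x : a.left, dist (mval a x) (mval b (Φ x)) ≤ (ε : ℝ)) ∧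
    interleavingDist overFlowM a b =
      ⨅ Φ : a.left ≃ₜ b.left, ⨆ x : a.left,
        ENNReal.ofReal (dist (mval a x) (mval b (Φ x))) := by
  refine ⟨fun ε => overFlowM_weaklyInterleaved_iff, ?_⟩
  simp only [interleavingDist, overFlowM_weaklyInterleaved_iff]
  exact ENNReal.sInf_exists_forall_le_eq_iInf_iSup_ofReal _
end

section
/- Let (H, η) be a colax [0,∞)-equivariant functor from a category with a flow (C, T, u, μ) to a category with a flow (D, S, v, λ). If (φ, ψ) is a weak ε-interleaving of objects a and b in C, then the pair ((η_ε at b) ∘ H(φ), (η_ε at a) ∘ H(ψ)) is a weak ε-interleaving of H(a) and H(b) in D. Consequently H is 1-Lipschitz with respect to the interleaving distances: d_(D,S)(H(a), H(b)) ≤ d_(C,T)(a, b) for every pair of objects a, b of C. -/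
open CategoryTheory
open scoped NNReal ENNReal

universe v u

universe v₂ u₂ v₃ u₃

/-- A colax `[0,∞)`-equivariant structure on a functor `H : C ⥤ D` between categories
equipped with flows: natural transformations `η_ε : H ∘ T_ε ⟹ S_ε ∘ H` compatible with
the units, the order morphisms, and the multiplications of the two flows. -/
structure ColaxStructure {C : Type u} [Category.{v} C] {D : Type u₂} [Category.{v₂} D]
    (FC : CatFlow C) (FD : CatFlow D) (H : C ⥤ D) where
  η : ∀ ε : ℝ≥0, FC.T ε ⋙ H ⟶ H ⋙ FD.T ε
  η_unit : ∀ a : C, H.map (FC.u.app a) ≫ (η 0).app a = FD.u.app (H.obj a)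
  η_mono : ∀ {ε ζ : ℝ≥0} (h : ε ≤ ζ) (a : C),
    H.map ((FC.Tle h).app a) ≫ (η ζ).app a = (η ε).app a ≫ (FD.Tle h).app (H.obj a)
  η_mul : ∀ (ε ζ : ℝ≥0) (a : C),
    (η ε).app ((FC.T ζ).obj a) ≫ (FD.T ε).map ((η ζ).app a) ≫ (FD.μ ε ζ).app (H.obj a)
      = H.map ((FC.μ ε ζ).app a) ≫ (η (ε + ζ)).app a

namespace ColaxStructure

variable {C : Type u} [Category.{v} C] {D : Type u₂} [Category.{v₂} D]
  {FC : CatFlow C} {FD : CatFlow D} {H : C ⥤ D}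

theorem map_comp_η_comp_map_comp_μ (E : ColaxStructure FC FD H) {ε ζ : ℝ≥0} {a b : C}
    (φ : a ⟶ (FC.T ε).obj b) (ψ : b ⟶ (FC.T ζ).obj a) :
    (H.map φ ≫ (E.η ε).app b) ≫ (FD.T ε).map (H.map ψ ≫ (E.η ζ).app a)
        ≫ (FD.μ ε ζ).app (H.obj a)
      = H.map (φ ≫ (FC.T ε).map ψ ≫ (FC.μ ε ζ).app a) ≫ (E.η (ε + ζ)).app a := by
  have naturality : (E.η ε).app b ≫ (FD.T ε).map (H.map ψ)
      = H.map ((FC.T ε).map ψ) ≫ (E.η ε).app ((FC.T ζ).obj a) :=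
    ((E.η ε).naturality ψ).symm
  simp only [Functor.map_comp, Category.assoc, reassoc_of% naturality, E.η_mul]

theorem map_u_comp_Tle (E : ColaxStructure FC FD H) {ζ : ℝ≥0} (h : 0 ≤ ζ) (a : C) :
    H.map (FC.u.app a ≫ (FC.Tle h).app a) ≫ (E.η ζ).app a
      = FD.u.app (H.obj a) ≫ (FD.Tle h).app (H.obj a) := by
  rw [Functor.map_comp, Category.assoc, E.η_mono, ← Category.assoc, E.η_unit]

theorem isWeakInterleaving_map (E : ColaxStructure FC FD H) {ε : ℝ≥0} {a b : C}
    {φ : a ⟶ (FC.T ε).obj b} {ψ : b ⟶ (FC.T ε).obj a}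
    (hI : IsWeakInterleaving FC ε a b φ ψ) :
    IsWeakInterleaving FD ε (H.obj a) (H.obj b)
      (H.map φ ≫ (E.η ε).app b) (H.map ψ ≫ (E.η ε).app a) where
  left := by rw [map_comp_η_comp_map_comp_μ, hI.left, map_u_comp_Tle]
  right := by rw [map_comp_η_comp_map_comp_μ, hI.right, map_u_comp_Tle]

theorem weaklyInterleaved_map (E : ColaxStructure FC FD H) {ε : ℝ≥0} {a b : C}
    (h : WeaklyInterleaved FC ε a b) :
    WeaklyInterleaved FD ε (H.obj a) (H.obj b) :=
  let ⟨_, _, hI⟩ := h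
  ⟨_, _, E.isWeakInterleaving_map hI⟩

theorem interleavingDist_map_le (E : ColaxStructure FC FD H) (a b : C) :
    interleavingDist FD (H.obj a) (H.obj b) ≤ interleavingDist FC a b :=
  sInf_le_sInf fun _ ⟨ε, hx, h⟩ => ⟨ε, hx, E.weaklyInterleaved_map h⟩

end ColaxStructure

/-- A colax `[0,∞)`-equivariant functor sends weak `ε`-interleavings to weak
`ε`-interleavings and is therefore 1-Lipschitz with respect to the interleaving
distances (soft stability). -/
theorem colax_equivariant_stability {C : Type u} [Category.{v} C]
    {D : Type u₂} [Category.{v₂} D] (FC : CatFlow C) (FD : CatFlow D)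
    (H : C ⥤ D) (E : ColaxStructure FC FD H) :
    (∀ (ε : ℝ≥0) (a b : C) (φ : a ⟶ (FC.T ε).obj b) (ψ : b ⟶ (FC.T ε).obj a),
      IsWeakInterleaving FC ε a b φ ψ →
      IsWeakInterleaving FD ε (H.obj a) (H.obj b)
        (H.map φ ≫ (E.η ε).app b) (H.map ψ ≫ (E.η ε).app a)) ∧
    ∀ a b : C, interleavingDist FD (H.obj a) (H.obj b) ≤ interleavingDist FC a b :=
  ⟨fun _ _ _ _ _ => E.isWeakInterleaving_map, E.interleavingDist_map_le⟩
end

section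
/- Let P be a preorder with a superlinear family of translations Ω, let D and E be categories, and let H : D ⥤ E be a functor. Post-composition with H sends every weak ε-interleaving of functors F, G : P ⥤ D (with respect to the induced flow −·Ω on D^P) to a weak ε-interleaving of H∘F and H∘G (with respect to the induced flow −·Ω on E^P). In particular, d_(E^P, −·Ω)(H∘F, H∘G) ≤ d_(D^P, −·Ω)(F, G). -/
open CategoryTheory
open scoped NNReal ENNReal

universe v u

/-- A superlinear family of translations on a preorder `P`. -/
structure SuperlinearFamily (P : Type u) [Preorder P] where
  /-- the underlying translation maps -/
  Ω : ℝ≥0 → P → P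
  mono : ∀ ε : ℝ≥0, Monotone (Ω ε)
  le_self : ∀ (ε : ℝ≥0) (p : P), p ≤ Ω ε p
  mono_eps : ∀ {ε ζ : ℝ≥0}, ε ≤ ζ → ∀ p : P, Ω ε p ≤ Ω ζ p
  superlinear : ∀ (ε ζ : ℝ≥0) (p : P), Ω ε (Ω ζ p) ≤ Ω (ε + ζ) p
universe v₂ u₂ v₃ u₃

section InducedFlow

variable {P : Type u} [Preorder P] {D : Type u₂} [Category.{v₂} D]

private lemma map_homOfLE_comp_eq_eqToHom (F : P ⥤ D) {p q r : P} (h₁ : p ≤ q) (h₂ : q ≤ r)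
    (hpr : p = r) :
    F.map (homOfLE h₁) ≫ F.map (homOfLE h₂) = eqToHom (congrArg F.obj hpr) := by
  subst hpr
  rw [← F.map_comp, show homOfLE h₁ ≫ homOfLE h₂ = 𝟙 p from Subsingleton.elim _ _,
    F.map_id, eqToHom_refl]

/-- The flow induced on a functor category `P ⥤ D` ("generalized persistence modules")
by a superlinear family of translations on the preorder `P`, given by precomposition. -/
def SuperlinearFamily.inducedFlow (S : SuperlinearFamily P) (D : Type u₂) [Category.{v₂} D] :
    CatFlow (P ⥤ D) where
  T ε := (Functor.whiskeringLeft P P D).obj (S.mono ε).functor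
  Tle {ε ζ} h :=
    { app := fun F =>
        { app := fun p => F.map (homOfLE (S.mono_eps h p))
          naturality := fun p q hpq => by
            dsimp
            erw [← F.map_comp, ← F.map_comp]
            exact congrArg F.map (Subsingleton.elim _ _) }
      naturality := fun F G α => by
        ext p
        exact (α.naturality _).symm }
  Tle_refl ε := by
    ext F p
    dsimp
    simp
  Tle_trans h₁ h₂ := by
    ext F p
    dsimp
    rw [← F.map_comp]
    exact congrArg F.map (Subsingleton.elim _ _)
  u :=
    { app := fun F =>
        { app := fun p => F.map (homOfLE (S.le_self 0 p))
          naturality := fun p q hpq => by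
            dsimp
            erw [← F.map_comp, ← F.map_comp]
            exact congrArg F.map (Subsingleton.elim _ _) }
      naturality := fun F G α => by
        ext p
        exact (α.naturality _).symm }
  μ ε ζ :=
    { app := fun F =>
        { app := fun p => F.map (homOfLE ((S.superlinear ζ ε p).trans
            (S.mono_eps (le_of_eq (add_comm ζ ε)) p)))
          naturality := fun p q hpq => by
            dsimp
            erw [← F.map_comp, ← F.map_comp]
            exact congrArg F.map (Subsingleton.elim _ _) }
      naturality := fun F G α => by
        ext p
        exact (α.naturality _).symm }
  unit_left ε F := by
    ext p
    simp only [NatTrans.comp_app, eqToHom_app]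
    dsimp
    exact map_homOfLE_comp_eq_eqToHom F _ _ (by rw [zero_add])
  unit_right ε F := by
    ext p
    simp only [NatTrans.comp_app, eqToHom_app]
    dsimp
    exact map_homOfLE_comp_eq_eqToHom F _ _ (by rw [add_zero])
  assoc ε ζ δ F := by
    ext p
    simp only [NatTrans.comp_app, eqToHom_app]
    dsimp
    rw [show (eqToHom (by rw [add_assoc]) :
        F.obj (S.Ω (ε + (ζ + δ)) p) ⟶ F.obj (S.Ω (ε + ζ + δ) p)) =
        F.map (eqToHom (by rw [add_assoc])) from (eqToHom_map F _).symm]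
    erw [← F.map_comp, ← F.map_comp, ← F.map_comp]
    exact congrArg F.map (Subsingleton.elim _ _)
  compat h₁ h₂ F := by
    ext p
    simp only [NatTrans.comp_app]
    dsimp
    erw [← F.map_comp, ← F.map_comp, ← F.map_comp]
    exact congrArg F.map (Subsingleton.elim _ _)

end InducedFlow

/- The structure maps of the induced flow on `P ⥤ E` at `F ⋙ H` are, definitionally, the images
under `H` of those on `P ⥤ D` at `F`, so the interleaving identities are the images of the given ones. -/
theorem IsWeakInterleaving.whiskerRight {P : Type u} [Preorder P] {D : Type u₂} [Category.{v₂} D]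
    {E : Type u₃} [Category.{v₃} E] {S : SuperlinearFamily P} {ε : ℝ≥0} {F G : P ⥤ D}
    {φ : F ⟶ ((S.inducedFlow D).T ε).obj G} {ψ : G ⟶ ((S.inducedFlow D).T ε).obj F}
    (h : IsWeakInterleaving (S.inducedFlow D) ε F G φ ψ) (H : D ⥤ E) :
    IsWeakInterleaving (S.inducedFlow E) ε (F ⋙ H) (G ⋙ H)
      (Functor.whiskerRight φ H) (Functor.whiskerRight ψ H) where
  left := by
    ext p
    have hleft := congrArg H.map (NatTrans.congr_app h.left p)
    simp only [NatTrans.comp_app, Functor.map_comp] at hleft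
    exact hleft
  right := by
    ext p
    have hright := congrArg H.map (NatTrans.congr_app h.right p)
    simp only [NatTrans.comp_app, Functor.map_comp] at hright
    exact hright

theorem WeaklyInterleaved.whiskerRight {P : Type u} [Preorder P] {D : Type u₂} [Category.{v₂} D]
    {E : Type u₃} [Category.{v₃} E] {S : SuperlinearFamily P} {ε : ℝ≥0} {F G : P ⥤ D}
    (h : WeaklyInterleaved (S.inducedFlow D) ε F G) (H : D ⥤ E) :
    WeaklyInterleaved (S.inducedFlow E) ε (F ⋙ H) (G ⋙ H) :=
  let ⟨_, _, hφψ⟩ := h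
  ⟨_, _, hφψ.whiskerRight H⟩

theorem interleavingDist_le_of_forall_weaklyInterleaved {C : Type u} [Category.{v} C]
    {C' : Type u₂} [Category.{v₂} C'] {T : CatFlow C} {T' : CatFlow C'} {a b : C} {a' b' : C'}
    (h : ∀ ε, WeaklyInterleaved T ε a b → WeaklyInterleaved T' ε a' b') :
    interleavingDist T' a' b' ≤ interleavingDist T a b :=
  sInf_le_sInf fun _ ⟨ε, hx, hab⟩ => ⟨ε, hx, h ε hab⟩

/-- Post-composition with a functor `H : D ⥤ E` sends weak `ε`-interleavings of
generalized persistence modules (for the flows induced by `Ω`) to weak `ε`-interleavings,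
and is therefore 1-Lipschitz for the interleaving distances. -/
theorem postcomposition_weak_interleaving_stability {P : Type u} [Preorder P]
    {D : Type u₂} [Category.{v₂} D] {E : Type u₃} [Category.{v₃} E]
    (S : SuperlinearFamily P) (H : D ⥤ E) (F G : P ⥤ D) :
    (∀ (ε : ℝ≥0) (φ : F ⟶ ((S.inducedFlow D).T ε).obj G)
        (ψ : G ⟶ ((S.inducedFlow D).T ε).obj F),
      IsWeakInterleaving (S.inducedFlow D) ε F G φ ψ →
      IsWeakInterleaving (S.inducedFlow E) ε (F ⋙ H) (G ⋙ H)
        (Functor.whiskerRight φ H) (Functor.whiskerRight ψ H)) ∧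
    interleavingDist (S.inducedFlow E) (F ⋙ H) (G ⋙ H) ≤
      interleavingDist (S.inducedFlow D) F G := by
  exact ⟨fun _ _ _ h => h.whiskerRight H,
    interleavingDist_le_of_forall_weaklyInterleaved fun _ h => h.whiskerRight H⟩
end

section
/- Let P be a preorder with a superlinear family of translations Ω, let D and E be categories, and let H : D ⥤ E be a functor. If F, G : P ⥤ D are Ω_ε-interleaved via natural transformations (φ, ψ), then H∘F and H∘G are Ω_ε-interleaved via the whiskered natural transformations (H applied to φ, H applied to ψ). Consequently d_Ω(H∘F, H∘G) ≤ d_Ω(F, G). -/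
open CategoryTheory
open scoped NNReal ENNReal

universe v u v₂ u₂ v₃ u₃

/-- An `Ω_ε`-interleaving of generalized persistence modules `F, G : P ⥤ D`
(Bubenik–de Silva–Scott style). -/
structure OmegaInterleaving {P : Type u} [Preorder P] {D : Type u₂} [Category.{v₂} D]
    (S : SuperlinearFamily P) (ε : ℝ≥0) (F G : P ⥤ D) where
  φ : F ⟶ (S.mono ε).functor ⋙ G
  ψ : G ⟶ (S.mono ε).functor ⋙ F
  left : ∀ p : P, φ.app p ≫ ψ.app (S.Ω ε p)
      = F.map (homOfLE ((S.le_self ε p).trans (S.le_self ε (S.Ω ε p))))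
  right : ∀ p : P, ψ.app p ≫ φ.app (S.Ω ε p)
      = G.map (homOfLE ((S.le_self ε p).trans (S.le_self ε (S.Ω ε p))))

/-- `F` and `G` are `Ω_ε`-interleaved. -/
def OmegaInterleaved {P : Type u} [Preorder P] {D : Type u₂} [Category.{v₂} D]
    (S : SuperlinearFamily P) (ε : ℝ≥0) (F G : P ⥤ D) : Prop :=
  Nonempty (OmegaInterleaving S ε F G)

/-- The interleaving distance `d_Ω` of generalized persistence modules. -/
noncomputable def dOmega {P : Type u} [Preorder P] {D : Type u₂} [Category.{v₂} D]
    (S : SuperlinearFamily P) (F G : P ⥤ D) : ℝ≥0∞ :=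
  sInf { x : ℝ≥0∞ | ∃ ε : ℝ≥0, x = ε ∧ OmegaInterleaved S ε F G }

section Postcomposition

variable {P : Type u} [Preorder P] {D : Type u₂} [Category.{v₂} D] {E : Type u₃} [Category.{v₃} E]
  {S : SuperlinearFamily P} {ε : ℝ≥0} {F G : P ⥤ D}

def OmegaInterleaving.whiskerRight (I : OmegaInterleaving S ε F G) (H : D ⥤ E) :
    OmegaInterleaving S ε (F ⋙ H) (G ⋙ H) where
  φ := Functor.whiskerRight I.φ H
  ψ := Functor.whiskerRight I.ψ H
  left p := (H.map_comp _ _).symm.trans (congrArg H.map (I.left p))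
  right p := (H.map_comp _ _).symm.trans (congrArg H.map (I.right p))

theorem OmegaInterleaved.comp_right (h : OmegaInterleaved S ε F G) (H : D ⥤ E) :
    OmegaInterleaved S ε (F ⋙ H) (G ⋙ H) :=
  h.map (·.whiskerRight H)

theorem dOmega_comp_right_le (H : D ⥤ E) : dOmega S (F ⋙ H) (G ⋙ H) ≤ dOmega S F G :=
  sInf_le_sInf fun _ ⟨_, hx, h⟩ => ⟨_, hx, h.comp_right H⟩

end Postcomposition

/-- Post-composition with `H : D ⥤ E` sends an `Ω_ε`-interleaving `(φ, ψ)` of `F` and `G`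
to the `Ω_ε`-interleaving `(φ ◫ H, ψ ◫ H)` of `F ⋙ H` and `G ⋙ H` given by whiskering;
consequently `d_Ω(H∘F, H∘G) ≤ d_Ω(F, G)`. -/
theorem postcomposition_omega_interleaving_stability {P : Type u} [Preorder P]
    {D : Type u₂} [Category.{v₂} D] {E : Type u₃} [Category.{v₃} E]
    (S : SuperlinearFamily P) (H : D ⥤ E) (F G : P ⥤ D) :
    (∀ (ε : ℝ≥0) (I : OmegaInterleaving S ε F G),
      ∃ J : OmegaInterleaving S ε (F ⋙ H) (G ⋙ H),
        J.φ = Functor.whiskerRight I.φ H ∧ J.ψ = Functor.whiskerRight I.ψ H) ∧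
    dOmega S (F ⋙ H) (G ⋙ H) ≤ dOmega S F G :=
  ⟨fun _ I => ⟨I.whiskerRight H, rfl, rfl⟩, dOmega_comp_right_le H⟩
end
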